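/- For any n agents equipped with a metric d and any number of clusters k with 1 ≤ k ≤ n, there exists a single k-clustering that simultaneously satisfies 4-FJR with respect to the average loss and 2-FJR with respect to the maximum loss. -/

import Mathlib

open scoped Classical

/-- The maximum of `f` over the finite set `S` (`0` if `S` is empty). -/
noncomputable def maxOver {ι : Type*} (S : Finset ι) (f : ι → ℝ) : ℝ :=
  if h : S.Nonempty then S.sup' h f else 0

/-- The minimum of `f` over the finite set `S` (`0` if `S` is empty). -/
noncomputable def minOver {ι : Type*} (S : Finset ι) (f : ι → ℝ) : ℝ :=
  if h : S.Nonempty then S.inf' h f else 0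

/-- The cluster containing agent `i` under the clustering (assignment) `C`. -/
def clusterOf {n k : ℕ} (C : Fin n → Fin k) (i : Fin n) : Finset (Fin n) :=
  Finset.univ.filter (fun j => C j = C i)

/-- The average loss of agent `i` in cluster `S`. -/
noncomputable def avgLoss {n : ℕ} (d : Fin n → Fin n → ℝ) (i : Fin n)
    (S : Finset (Fin n)) : ℝ :=
  (∑ j ∈ S, d i j) / (S.card : ℝ)

/-- The maximum loss of agent `i` in cluster `S`. -/
noncomputable def maxLoss {n : ℕ} (d : Fin n → Fin n → ℝ) (i : Fin n)
    (S : Finset (Fin n)) : ℝ :=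
  maxOver S (d i)

/-- `d` is a (pseudo)metric on the agents: zero on the diagonal, symmetric, and
satisfying the triangle inequality. -/
def IsPseudometric {n : ℕ} (d : Fin n → Fin n → ℝ) : Prop :=
  (∀ i, d i i = 0) ∧ (∀ i j, d i j = d j i) ∧ (∀ i j l, d i l ≤ d i j + d j l)

/-- `C` is in the `α`-core: there is no group `S` of at least `n/k` agents such that
`α · ℓ i S < ℓ i (C(i))` for every `i ∈ S`. -/
def InCore {n k : ℕ} (α : ℝ) (ℓ : Fin n → Finset (Fin n) → ℝ) (C : Fin n → Fin k) : Prop :=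
  ¬ ∃ S : Finset (Fin n), (n : ℝ) / k ≤ S.card ∧ ∀ i ∈ S, α * ℓ i S < ℓ i (clusterOf C i)

/-- `C` satisfies `α`-FJR: there is no group `S` of at least `n/k` agents such that
`α · max_{i ∈ S} ℓ i S < min_{j ∈ S} ℓ j (C(j))`. -/
def SatisfiesFJR {n k : ℕ} (α : ℝ) (ℓ : Fin n → Finset (Fin n) → ℝ)
    (C : Fin n → Fin k) : Prop :=
  ¬ ∃ S : Finset (Fin n), (n : ℝ) / k ≤ S.card ∧
      α * maxOver S (fun i => ℓ i S) < minOver S (fun j => ℓ j (clusterOf C j))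


/-!
Repeatedly remove from the remaining agents a group of at least `n/k` agents whose
cohesion (the largest average loss of a member) is minimal, and make it a cluster; the
fewer than `n/k` agents left at the end form one more cluster, so at most `k` clusters
arise. If `S` is any group of at least `n/k` agents, let `j` be the member of `S` removed
first: when `j`'s cluster `T` was chosen, all of `S` was still available, so the cohesion
of `T` is at most that of `S`. This bounds the average loss of `j` in `T` directly. For the
maximum loss, averaging the triangle inequality over `T` gives
`d j t ≤ ℓ_j(T) + ℓ_t(T) ≤ 2 · cohesion T` for all `t ∈ T`, and the cohesion of `S` is at
most the largest maximum loss in `S`.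
-/

open Finset

section MaxMin

variable {ι : Type*} {S : Finset ι} {f : ι → ℝ}

lemma le_maxOver {i : ι} (hi : i ∈ S) : f i ≤ maxOver S f := by
  rw [maxOver, dif_pos ⟨i, hi⟩]
  exact le_sup' f hi

lemma maxOver_le {a : ℝ} (hS : S.Nonempty) (h : ∀ i ∈ S, f i ≤ a) : maxOver S f ≤ a := by
  rw [maxOver, dif_pos hS]
  exact sup'_le hS f h

lemma minOver_le {i : ι} (hi : i ∈ S) : minOver S f ≤ f i := by
  rw [minOver, dif_pos ⟨i, hi⟩]
  exact inf'_le f hi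

end MaxMin

theorem exists_labeling_class_cost_le {α : Type*} [DecidableEq α] {q : ℝ} (hq : 0 < q)
    (c : Finset α → ℝ) (R : Finset α) :
    ∃ f : α → ℕ, (∀ i ∈ R, f i * q < #R) ∧
      ∀ S ⊆ R, q ≤ #S → ∃ j ∈ S, c {i ∈ R | f i = f j} ≤ c S := by
  induction R using Finset.strongInduction with
  | H R ih =>
  set large := {T ∈ R.powerset | q ≤ #T}
  by_cases hlarge : large.Nonempty
  swap
  · refine ⟨0, fun i hi => by simpa using card_pos.mpr ⟨i, hi⟩, fun S hSR hS => ?_⟩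
    exact absurd ⟨S, mem_filter.mpr ⟨mem_powerset.mpr hSR, hS⟩⟩ hlarge
  obtain ⟨T, hT, hTmin⟩ := exists_min_image large c hlarge
  obtain ⟨hTR, hTq⟩ : T ⊆ R ∧ q ≤ #T := by simpa [large] using hT
  have hTne : T.Nonempty := card_pos.mp (by exact_mod_cast hq.trans_le hTq)
  obtain ⟨f, hf_lt, hf_cost⟩ := ih (R \ T) (sdiff_ssubset hTR hTne)
  have hcard : (#(R \ T) : ℝ) + #T = #R := by exact_mod_cast card_sdiff_add_card_eq_card hTR
  set g : α → ℕ := fun i => if i ∈ T then 0 else f i + 1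
  refine ⟨g, fun i hi => ?_, fun S hSR hS => ?_⟩
  · by_cases hiT : i ∈ T
    · simpa [g, hiT] using card_pos.mpr ⟨i, hi⟩
    · have := hf_lt i (mem_sdiff.mpr ⟨hi, hiT⟩)
      simp only [g, hiT, if_false]
      push_cast
      linarith
  by_cases hST : ∃ j ∈ S, j ∈ T
  · obtain ⟨j, hjS, hjT⟩ := hST
    have hclass : {i ∈ R | g i = g j} = T := by
      ext i
      by_cases hiT : i ∈ T
      · simp [g, hiT, hjT, hTR hiT]
      · simp [g, hiT, hjT]
    exact ⟨j, hjS, hclass ▸ hTmin S (by simpa [large] using ⟨hSR, hS⟩)⟩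
  · push Not at hST
    obtain ⟨j, hjS, hj⟩ := hf_cost S (fun i hi => mem_sdiff.mpr ⟨hSR hi, hST i hi⟩) hS
    have hclass : {i ∈ R | g i = g j} = {i ∈ R \ T | f i = f j} := by
      ext i
      by_cases hiT : i ∈ T <;> simp [g, hiT, hST j hjS]
    exact ⟨j, hjS, hclass ▸ hj⟩

lemma satisfiesFJR_of_exists_le {n k : ℕ} {α : ℝ} {ℓ : Fin n → Finset (Fin n) → ℝ}
    {C : Fin n → Fin k}
    (h : ∀ S : Finset (Fin n), (n : ℝ) / k ≤ #S →
      ∃ j ∈ S, ℓ j (clusterOf C j) ≤ α * maxOver S (fun i => ℓ i S)) :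
    SatisfiesFJR α ℓ C := by
  rintro ⟨S, hS, hlt⟩
  obtain ⟨j, hjS, hj⟩ := h S hS
  have := minOver_le (f := fun j => ℓ j (clusterOf C j)) hjS
  linarith

noncomputable def cohesion {n : ℕ} (d : Fin n → Fin n → ℝ) (T : Finset (Fin n)) : ℝ :=
  maxOver T (fun i => avgLoss d i T)

section Pseudometric

variable {n : ℕ} {d : Fin n → Fin n → ℝ}

lemma IsPseudometric.nonneg (hd : IsPseudometric d) (i j : Fin n) : 0 ≤ d i j := by
  have h := hd.2.2 i j i
  rw [hd.1 i, hd.2.1 j i] at h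
  linarith

lemma avgLoss_nonneg (hd : IsPseudometric d) (i : Fin n) (T : Finset (Fin n)) :
    0 ≤ avgLoss d i T :=
  div_nonneg (sum_nonneg fun j _ => hd.nonneg i j) (Nat.cast_nonneg _)

lemma cohesion_nonneg (hd : IsPseudometric d) {T : Finset (Fin n)} (hT : T.Nonempty) :
    0 ≤ cohesion d T :=
  let ⟨i, hi⟩ := hT
  (avgLoss_nonneg hd i T).trans (le_maxOver (f := fun i => avgLoss d i T) hi)

lemma avgLoss_le_maxLoss {T : Finset (Fin n)} (hT : T.Nonempty) (i : Fin n) :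
    avgLoss d i T ≤ maxLoss d i T := by
  rw [avgLoss, div_le_iff₀ (by exact_mod_cast hT.card_pos)]
  calc ∑ j ∈ T, d i j ≤ ∑ _j ∈ T, maxLoss d i T := sum_le_sum fun j hj => le_maxOver hj
    _ = maxLoss d i T * #T := by rw [sum_const, nsmul_eq_mul, mul_comm]

lemma cohesion_le_maxOver_maxLoss {T : Finset (Fin n)} (hT : T.Nonempty) :
    cohesion d T ≤ maxOver T (fun i => maxLoss d i T) :=
  maxOver_le hT fun i hi =>
    (avgLoss_le_maxLoss hT i).trans (le_maxOver (f := fun i => maxLoss d i T) hi)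

lemma IsPseudometric.le_avgLoss_add_avgLoss (hd : IsPseudometric d) {T : Finset (Fin n)}
    (hT : T.Nonempty) (i j : Fin n) : d i j ≤ avgLoss d i T + avgLoss d j T := by
  rw [avgLoss, avgLoss, ← add_div, ← sum_add_distrib,
    le_div_iff₀ (by exact_mod_cast hT.card_pos), ← nsmul_eq_mul', ← sum_const]
  exact sum_le_sum fun x _ => hd.2.1 j x ▸ hd.2.2 i x j

lemma IsPseudometric.maxLoss_le_two_mul_cohesion (hd : IsPseudometric d)
    {T : Finset (Fin n)} {i : Fin n} (hi : i ∈ T) : maxLoss d i T ≤ 2 * cohesion d T :=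
  maxOver_le ⟨i, hi⟩ fun j hj => by
    have := hd.le_avgLoss_add_avgLoss ⟨i, hi⟩ i j
    have := le_maxOver (f := fun i => avgLoss d i T) hi
    have := le_maxOver (f := fun i => avgLoss d i T) hj
    simp only [cohesion] at *
    linarith

end Pseudometric

lemma mem_clusterOf_self {n k : ℕ} (C : Fin n → Fin k) (j : Fin n) : j ∈ clusterOf C j := by
  simp [clusterOf]

lemma clusterOf_mk {n k : ℕ} (f : Fin n → ℕ) (hf : ∀ i, f i < k) (j : Fin n) :
    clusterOf (fun i => (⟨f i, hf i⟩ : Fin k)) j = ({i | f i = f j} : Finset (Fin n)) := by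
  simp [clusterOf, Fin.ext_iff]

/-- For any `n` agents with a metric `d` and any `k` with `1 ≤ k ≤ n`, there is a single
`k`-clustering that simultaneously satisfies `4`-FJR for the average loss and `2`-FJR for
the maximum loss. -/
theorem stmt11 (n k : ℕ) (hk : 1 ≤ k) (hkn : k ≤ n) (d : Fin n → Fin n → ℝ)
    (hd : IsPseudometric d) :
    ∃ C : Fin n → Fin k, SatisfiesFJR 4 (avgLoss d) C ∧ SatisfiesFJR 2 (maxLoss d) C := by
  have hk' : (0 : ℝ) < k := by exact_mod_cast hk
  have hq : (0 : ℝ) < n / k := div_pos (by exact_mod_cast (by omega : 0 < n)) hk'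
  obtain ⟨f, hf_lt, hf_cost⟩ := exists_labeling_class_cost_le hq (cohesion d) univ
  have hfk : ∀ i, f i < k := fun i => by
    have h : (f i : ℝ) * (n / k) < k * (n / k) := by
      simpa [mul_div_cancel₀ _ hk'.ne'] using hf_lt i (mem_univ i)
    exact_mod_cast lt_of_mul_lt_mul_right h hq.le
  obtain ⟨C, hC⟩ : ∃ C : Fin n → Fin k,
      ∀ j, clusterOf C j = ({i | f i = f j} : Finset (Fin n)) :=
    ⟨_, clusterOf_mk f hfk⟩
  have capture : ∀ S : Finset (Fin n), (n : ℝ) / k ≤ #S →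
      ∃ j ∈ S, cohesion d (clusterOf C j) ≤ cohesion d S := fun S hS => by
    simpa only [hC] using hf_cost S (subset_univ S) hS
  refine ⟨C, satisfiesFJR_of_exists_le fun S hS => ?_, satisfiesFJR_of_exists_le fun S hS => ?_⟩
  all_goals obtain ⟨j, hjS, hj⟩ := capture S hS; refine ⟨j, hjS, ?_⟩
  · calc avgLoss d j (clusterOf C j) ≤ cohesion d (clusterOf C j) :=
          le_maxOver (f := fun i => avgLoss d i (clusterOf C j)) (mem_clusterOf_self C j)
      _ ≤ cohesion d S := hj
      _ ≤ 4 * cohesion d S := by linarith [cohesion_nonneg hd ⟨j, hjS⟩]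
  · calc maxLoss d j (clusterOf C j) ≤ 2 * cohesion d (clusterOf C j) :=
          hd.maxLoss_le_two_mul_cohesion (mem_clusterOf_self C j)
      _ ≤ 2 * cohesion d S := by linarith
      _ ≤ 2 * maxOver S (fun i => maxLoss d i S) := by
          gcongr; exact cohesion_le_maxOver_maxLoss ⟨j, hjS⟩
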